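/- arXiv:0707.0865 — 2 statements merged into one kernel-verified Lean document; each statement's English description precedes it below -/
import Mathlib

section
/- Let S₁, S₂ ⊆ ℝ and suppose there exists a point x₀ ∈ ℝ that is both an accumulation point of S₁ from the left and of S₂ from the left (i.e., there exist strictly increasing sequences in S₁ and in S₂ both converging to x₀). If S₁ and S₂ are separated by a finite number of points, derive a contradiction; i.e., sets sharing a common one-sided accumulation point from the same side are not separated by a finite number of points. -/
open Filter

/-- The `k`-th interval `[α_k, α_{k+1}]` determined by the finite list `α 1 ≤ ⋯ ≤ α N`,
with the conventions `α 0 = -∞` and `α (N+1) = +∞`. -/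
def sepSeg (N : ℕ) (α : ℕ → ℝ) (k : ℕ) : Set ℝ :=
  (if k = 0 then Set.univ else Set.Ici (α k)) ∩ (if k = N then Set.univ else Set.Iic (α (k + 1)))

/-- Two sets `S₁, S₂ ⊆ ℝ` are separated by a finite number of points if there are
`-∞ = α₀ < α₁ ≤ ⋯ ≤ α_N < α_{N+1} = +∞` such that one of the sets is contained in
`⋃_{k even} [α_k, α_{k+1}]` and the other in `⋃_{k odd} [α_k, α_{k+1}]`. -/
def SeparatedByFinitelyManyPoints (S₁ S₂ : Set ℝ) : Prop :=
  ∃ (N : ℕ) (α : ℕ → ℝ),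
    (∀ k, 1 ≤ k → k < N → α k ≤ α (k + 1)) ∧
    (((S₁ ⊆ ⋃ k ∈ {k : ℕ | k ≤ N ∧ Even k}, sepSeg N α k) ∧
        (S₂ ⊆ ⋃ k ∈ {k : ℕ | k ≤ N ∧ Odd k}, sepSeg N α k)) ∨
      ((S₂ ⊆ ⋃ k ∈ {k : ℕ | k ≤ N ∧ Even k}, sepSeg N α k) ∧
        (S₁ ⊆ ⋃ k ∈ {k : ℕ | k ≤ N ∧ Odd k}, sepSeg N α k)))

lemma sep_chain (N : ℕ) (α : ℕ → ℝ) (h : ∀ k, 1 ≤ k → k < N → α k ≤ α (k + 1)) :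
    ∀ i j, 1 ≤ i → i ≤ j → j ≤ N → α i ≤ α j := by
  intro i j hi hij hjN
  induction j with
  | zero => omega
  | succ m ih =>
    rcases Nat.eq_or_lt_of_le hij with rfl | hlt
    · exact le_rfl
    · have him : i ≤ m := by omega
      have h1 : α m ≤ α (m + 1) := h m (by omega) (by omega)
      exact (ih him (by omega)).trans h1

lemma sep_no_two (N : ℕ) (α : ℕ → ℝ)
    (hmono : ∀ i j, 1 ≤ i → i ≤ j → j ≤ N → α i ≤ α j) (β x₀ : ℝ)
    (hsep : ∀ k, 1 ≤ k → k ≤ N → α k ≤ β ∨ x₀ ≤ α k)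
    {k j : ℕ} (hkj : k < j) (hjN : j ≤ N) {a b : ℝ}
    (ha : a ∈ sepSeg N α k) (hb : b ∈ sepSeg N α j)
    (haI : a ∈ Set.Ioo β x₀) (hbI : b ∈ Set.Ioo β x₀) : False := by
  have hkN : k < N := lt_of_lt_of_le hkj hjN
  have ha2 : a ≤ α (k + 1) := by
    have := ha.2
    rw [if_neg (by omega)] at this
    exact this
  have hb1 : α j ≤ b := by
    have := hb.1
    rw [if_neg (by omega)] at this
    exact this
  -- α (k+1) > β so α (k+1) ≥ x₀
  have hk1 : x₀ ≤ α (k + 1) := by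
    rcases hsep (k + 1) (by omega) (by omega) with h | h
    · exact absurd (lt_of_lt_of_le haI.1 ha2) (not_lt_of_ge h)
    · exact h
  have hj1 : α j ≤ β := by
    rcases hsep j (by omega) hjN with h | h
    · exact h
    · exact absurd (lt_of_le_of_lt h (lt_of_le_of_lt hb1 hbI.2)) (lt_irrefl _)
  have : α (k + 1) ≤ α j := hmono (k + 1) j (by omega) (by omega) hjN
  have hxb : x₀ ≤ β := hk1.trans (this.trans hj1)
  have := haI.1
  have := haI.2
  linarith

/-- If `x₀` is a one-sided (left) accumulation point of both `S₁` and `S₂`, then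
`S₁` and `S₂` are not separated by a finite number of points. -/
theorem stmt_10 (S₁ S₂ : Set ℝ) (x₀ : ℝ) (u v : ℕ → ℝ)
    (hu : StrictMono u) (hv : StrictMono v)
    (huS : ∀ n, u n ∈ S₁) (hvS : ∀ n, v n ∈ S₂)
    (hul : Tendsto u atTop (nhds x₀)) (hvl : Tendsto v atTop (nhds x₀)) :
    ¬ SeparatedByFinitelyManyPoints S₁ S₂ := by
  rintro ⟨N, α, hα, hcase⟩
  have hmono := sep_chain N α hα
  -- u n < x₀ and v n < x₀ for all n
  have hule : ∀ n, u n ≤ x₀ := fun n => hu.monotone.ge_of_tendsto hul n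
  have hvle : ∀ n, v n ≤ x₀ := fun n => hv.monotone.ge_of_tendsto hvl n
  have hult : ∀ n, u n < x₀ := fun n => lt_of_lt_of_le (hu (Nat.lt_succ_self n)) (hule (n + 1))
  have hvlt : ∀ n, v n < x₀ := fun n => lt_of_lt_of_le (hv (Nat.lt_succ_self n)) (hvle (n + 1))
  -- choose β < x₀ with no α k (1 ≤ k ≤ N) in (β, x₀)
  set F : Finset ℝ := insert (x₀ - 1)
      (((Finset.range (N + 1)).image α).filter (fun y => y < x₀)) with hF
  have hFne : F.Nonempty := ⟨x₀ - 1, Finset.mem_insert_self _ _⟩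
  set β : ℝ := F.max' hFne with hβ
  have hβlt : β < x₀ := by
    rcases Finset.mem_insert.mp (F.max'_mem hFne) with h | h
    · rw [hβ, h]; linarith
    · exact (Finset.mem_filter.mp h).2
  have hsep : ∀ k, 1 ≤ k → k ≤ N → α k ≤ β ∨ x₀ ≤ α k := by
    intro k hk1 hkN
    rcases lt_or_ge (α k) x₀ with h | h
    · left
      apply F.le_max' _
      rw [hF]
      exact Finset.mem_insert_of_mem (Finset.mem_filter.mpr
        ⟨Finset.mem_image_of_mem α (Finset.mem_range.mpr (by omega)), h⟩)
    · right; exact h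
  -- find points of u, v in (β, x₀)
  obtain ⟨n, hn⟩ := (hul.eventually (eventually_gt_nhds hβlt)).exists
  obtain ⟨m, hm⟩ := (hvl.eventually (eventually_gt_nhds hβlt)).exists
  have hnI : u n ∈ Set.Ioo β x₀ := ⟨hn, hult n⟩
  have hmI : v m ∈ Set.Ioo β x₀ := ⟨hm, hvlt m⟩
  -- extract segment memberships and derive contradiction
  have key : ∀ (a b : ℝ), a ∈ Set.Ioo β x₀ → b ∈ Set.Ioo β x₀ →
      (∃ k, k ≤ N ∧ Even k ∧ a ∈ sepSeg N α k) →
      (∃ j, j ≤ N ∧ Odd j ∧ b ∈ sepSeg N α j) → False := by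
    rintro a b haI hbI ⟨k, hkN, hke, hak⟩ ⟨j, hjN, hjo, hbj⟩
    have hkj : k ≠ j := by
      rintro rfl
      exact (Nat.not_odd_iff_even.mpr hke) hjo
    rcases Nat.lt_or_ge k j with h | h
    · exact sep_no_two N α hmono β x₀ hsep h hjN hak hbj haI hbI
    · exact sep_no_two N α hmono β x₀ hsep (by omega) hkN hbj hak hbI haI
  rcases hcase with ⟨h1, h2⟩ | ⟨h1, h2⟩
  · have ha := h1 (huS n)
    have hb := h2 (hvS m)
    simp only [Set.mem_iUnion, Set.mem_setOf_eq, exists_prop] at ha hb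
    exact key (u n) (v m) hnI hmI ⟨ha.choose, ha.choose_spec.1.1, ha.choose_spec.1.2,
      ha.choose_spec.2⟩ ⟨hb.choose, hb.choose_spec.1.1, hb.choose_spec.1.2, hb.choose_spec.2⟩
  · have ha := h1 (hvS m)
    have hb := h2 (huS n)
    simp only [Set.mem_iUnion, Set.mem_setOf_eq, exists_prop] at ha hb
    exact key (v m) (u n) hmI hnI ⟨ha.choose, ha.choose_spec.1.1, ha.choose_spec.1.2,
      ha.choose_spec.2⟩ ⟨hb.choose, hb.choose_spec.1.1, hb.choose_spec.1.2, hb.choose_spec.2⟩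
end

section
/- Define the 'separation' relation: S₁, S₂ ⊆ ℝ are separated by finitely many points iff there is a finite increasing list α₁ ≤ ⋯ ≤ α_N with S₁ ⊆ ⋃_{k even}[α_k, α_{k+1}], S₂ ⊆ ⋃_{k odd}[α_k, α_{k+1}] (or vice versa), with α₀ = -∞, α_{N+1} = ∞. Prove that if S₁ = {s_k : k ∈ ℕ} ∪ [1, ∞) and S₂ = {-s_k : k ∈ ℕ} ∪ (-∞, -1] where (s_k) ⊆ (-1,1)\{0} is a sequence converging to 0 that takes both positive and negative values infinitely often, then S₁ and S₂ are NOT separated by a finite number of points. -/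
open Filter

/-- If `(s k) ⊆ (-1,1)\{0}` converges to `0` and takes both positive and negative values
infinitely often, then `S₁ = {s k} ∪ [1,∞)` and `S₂ = {-s k} ∪ (-∞,-1]` are not
separated by a finite number of points. -/
theorem stmt_17 (s : ℕ → ℝ)
    (hs : ∀ k, s k ∈ Set.Ioo (-1 : ℝ) 1 ∧ s k ≠ 0)
    (hlim : Tendsto s atTop (nhds 0))
    (hpos : ∀ N, ∃ k, N ≤ k ∧ 0 < s k) (hneg : ∀ N, ∃ k, N ≤ k ∧ s k < 0) :
    ¬ SeparatedByFinitelyManyPoints (Set.range s ∪ Set.Ici 1)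
        (Set.range (fun k => -s k) ∪ Set.Iic (-1)) := by
  rintro ⟨N, α, hmono, hcase⟩
  -- α is monotone on [1, N]
  have chain : ∀ a b : ℕ, 1 ≤ a → a ≤ b → b ≤ N → α a ≤ α b := by
    intro a b ha hab hbN
    induction b, hab using Nat.le_induction with
    | base => exact le_refl _
    | succ n hn ih =>
        exact le_trans (ih (by omega)) (hmono n (le_trans ha hn) (by omega))
  -- choose ε > 0 below all positive α k (1 ≤ k ≤ N) and ≤ 1
  obtain ⟨ε, hε0, hε1, hεα⟩ :
      ∃ ε : ℝ, 0 < ε ∧ ε ≤ 1 ∧ ∀ k, 1 ≤ k → k ≤ N → 0 < α k → ε ≤ α k := by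
    by_cases h : ((((Finset.Icc 1 N).image α).filter (fun x => 0 < x))).Nonempty
    · refine ⟨min 1 ((((Finset.Icc 1 N).image α).filter (fun x => 0 < x)).min' h),
        ?_, min_le_left _ _, ?_⟩
      · have hm := Finset.min'_mem _ h
        rw [Finset.mem_filter] at hm
        exact lt_min one_pos hm.2
      · intro k hk1 hkN hkpos
        refine le_trans (min_le_right _ _) (Finset.min'_le _ _ ?_)
        exact Finset.mem_filter.mpr
          ⟨Finset.mem_image.mpr ⟨k, Finset.mem_Icc.mpr ⟨hk1, hkN⟩, rfl⟩, hkpos⟩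
    · refine ⟨1, one_pos, le_refl _, ?_⟩
      intro k hk1 hkN hkpos
      exact absurd ⟨α k, Finset.mem_filter.mpr
        ⟨Finset.mem_image.mpr ⟨k, Finset.mem_Icc.mpr ⟨hk1, hkN⟩, rfl⟩, hkpos⟩⟩ h
  -- a segment containing one point of (0,ε) contains all of (0,ε)
  have key : ∀ j, j ≤ N → ∀ x, x ∈ sepSeg N α j → x ∈ Set.Ioo (0:ℝ) ε →
      Set.Ioo (0:ℝ) ε ⊆ sepSeg N α j := by
    intro j hjN x hx hxε y hy
    simp only [sepSeg, Set.mem_inter_iff] at hx ⊢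
    constructor
    · by_cases hj0 : j = 0
      · simp [hj0]
      · rw [if_neg hj0] at hx ⊢
        have hxα : α j ≤ x := hx.1
        by_cases hp : 0 < α j
        · exact absurd (lt_of_le_of_lt hxα hxε.2)
            (not_lt.mpr (hεα j (by omega) hjN hp))
        · exact (not_lt.mp hp).trans hy.1.le
    · by_cases hjN' : j = N
      · simp [hjN']
      · rw [if_neg hjN'] at hx ⊢
        have hxα : x ≤ α (j + 1) := hx.2
        have hp : 0 < α (j + 1) := lt_of_lt_of_le hxε.1 hxα
        have : ε ≤ α (j + 1) := hεα (j + 1) (by omega) (by omega) hp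
        exact le_trans hy.2.le this
  -- two distinct segments cannot both contain (0,ε)
  have sub : ∀ i i' : ℕ, i < i' → i' ≤ N →
      Set.Ioo (0:ℝ) ε ⊆ sepSeg N α i → Set.Ioo (0:ℝ) ε ⊆ sepSeg N α i' → False := by
    intro i i' hii hiN hsi hsi'
    have hx1 : (ε/2) ∈ Set.Ioo (0:ℝ) ε := ⟨by linarith, by linarith⟩
    have hx2 : (ε/4) ∈ Set.Ioo (0:ℝ) ε := ⟨by linarith, by linarith⟩
    have h1 := hsi hx1
    have h2 := hsi' hx2
    simp only [sepSeg, Set.mem_inter_iff] at h1 h2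
    have hup : ε/2 ≤ α (i + 1) := by
      have := h1.2; rwa [if_neg (by omega : i ≠ N)] at this
    have hlow : α i' ≤ ε/4 := by
      have := h2.1; rwa [if_neg (by omega : i' ≠ 0)] at this
    have hmid : α (i + 1) ≤ α i' := chain (i + 1) i' (by omega) (by omega) hiN
    linarith
  have main : ∀ je jo : ℕ, je ≤ N → jo ≤ N → Even je → Odd jo →
      Set.Ioo (0:ℝ) ε ⊆ sepSeg N α je → Set.Ioo (0:ℝ) ε ⊆ sepSeg N α jo → False := by
    intro je jo hje hjo hev hod hse hso
    have hne : je ≠ jo := by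
      intro h; exact (Nat.not_odd_iff_even.mpr hev) (h ▸ hod)
    rcases lt_or_gt_of_ne hne with h | h
    · exact sub je jo h hjo hse hso
    · exact sub jo je h hje hso hse
  -- get points of both sets in (0, ε)
  obtain ⟨M, hM⟩ := Metric.tendsto_atTop.mp hlim ε hε0
  obtain ⟨a, haM, hapos⟩ := hpos M
  obtain ⟨b, hbM, hbneg⟩ := hneg M
  have hsa : s a ∈ Set.Ioo (0:ℝ) ε := by
    have := hM a haM
    rw [Real.dist_eq, sub_zero, abs_of_pos hapos] at this
    exact ⟨hapos, this⟩
  have hsb : -s b ∈ Set.Ioo (0:ℝ) ε := by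
    have := hM b hbM
    rw [Real.dist_eq, sub_zero, abs_of_neg hbneg] at this
    exact ⟨by linarith, this⟩
  have hS1 : s a ∈ Set.range s ∪ Set.Ici 1 := Or.inl ⟨a, rfl⟩
  have hS2 : -s b ∈ Set.range (fun k => -s k) ∪ Set.Iic (-1) := Or.inl ⟨b, rfl⟩
  rcases hcase with ⟨h1, h2⟩ | ⟨h2, h1⟩
  · have hv1 := h1 hS1
    have hv2 := h2 hS2
    simp only [Set.mem_iUnion, Set.mem_setOf_eq, exists_prop] at hv1 hv2
    obtain ⟨je, ⟨hjeN, hjeE⟩, hme⟩ := hv1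
    obtain ⟨jo, ⟨hjoN, hjoO⟩, hmo⟩ := hv2
    exact main je jo hjeN hjoN hjeE hjoO
      (key je hjeN _ hme hsa) (key jo hjoN _ hmo hsb)
  · have hv1 := h2 hS2
    have hv2 := h1 hS1
    simp only [Set.mem_iUnion, Set.mem_setOf_eq, exists_prop] at hv1 hv2
    obtain ⟨je, ⟨hjeN, hjeE⟩, hme⟩ := hv1
    obtain ⟨jo, ⟨hjoN, hjoO⟩, hmo⟩ := hv2
    exact main je jo hjeN hjoN hjeE hjoO
      (key je hjeN _ hme hsb) (key jo hjoN _ hmo hsa)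
end
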